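/- arXiv:2505.14947 — 6 statements merged into one kernel-verified Lean document; each statement's English description precedes it below -/
import Mathlib

section
/- Let n ≥ 1, let U and A be n×n complex matrices with U unitary, and suppose (v_1, …, v_n) is an orthonormal basis of ℂⁿ (with the standard Hermitian inner product) such that U v_i = λ_i v_i for complex numbers λ_1, …, λ_n. Then for every m ∈ ℤ, tr(U^m A) = ∑_{i=1}^n λ_i^m ⟨v_i, A v_i⟩, and for every real t with 0 < t < 1 the two-sided series ∑_{m∈ℤ} t^{|m|} tr(U^m A) converges absolutely and equals ∑_{i=1}^n ((1 − t²)/|t − λ_i|²) ⟨v_i, A v_i⟩. -/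
/-!
Expanding the trace in the orthonormal eigenbasis of `U` gives
`tr(U^m A) = ∑ i, λ_i^m ⟨v_i, A v_i⟩`. Since `|λ_i| = 1`, the Abel sum then splits into one
Poisson kernel `∑_m t^|m| λ^m = (1 - t²) / |t - λ|²` per eigenvalue, each the sum of two
geometric series in `tλ` and `tλ⁻¹ = tλ̄`. Absolute convergence is free, because `ℂ` is
finite-dimensional over `ℝ`.
-/

open scoped ComplexConjugate InnerProductSpace

theorem hasSum_pow_abs_mul_zpow {K : Type*} [NormedField K] [CompleteSpace K] {t l : K}
    (h₁ : ‖t * l‖ < 1) (h₂ : ‖t * l⁻¹‖ < 1) :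
    HasSum (fun m : ℤ => t ^ |m| * l ^ m) ((1 - t * l)⁻¹ + ((1 - t * l⁻¹)⁻¹ - 1)) := by
  refine HasSum.of_nat_of_neg_add_one ?_ ?_
  · have hterm : ∀ n : ℕ, t ^ |(n : ℤ)| * l ^ (n : ℤ) = (t * l) ^ n := fun n => by
      rw [Nat.abs_cast, zpow_natCast, zpow_natCast, mul_pow]
    simpa only [hterm] using hasSum_geometric_of_norm_lt_one h₁
  · have hterm : ∀ n : ℕ, t ^ |-((n : ℤ) + 1)| * l ^ (-((n : ℤ) + 1)) = (t * l⁻¹) ^ (n + 1) :=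
      fun n => by
        rw [abs_neg, zpow_neg, ← Nat.cast_succ, Nat.abs_cast, zpow_natCast, zpow_natCast,
          mul_pow, inv_pow]
    simpa only [hterm, Finset.range_one, Finset.sum_singleton, pow_zero] using
      (hasSum_nat_add_iff' (f := fun n => (t * l⁻¹) ^ n) 1).mpr
        (hasSum_geometric_of_norm_lt_one h₂)

theorem hasSum_poissonKernel {t : ℝ} (ht : |t| < 1) {l : ℂ} (hl : ‖l‖ = 1) :
    HasSum (fun m : ℤ => ((t ^ |m| : ℝ) : ℂ) * l ^ m)
      (((1 - t ^ 2) / ‖(t : ℂ) - l‖ ^ 2 : ℝ) : ℂ) := by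
  have hl₀ : l ≠ 0 := norm_ne_zero_iff.mp (by simp [hl])
  have h₁ : ‖(t : ℂ) * l‖ < 1 := by simpa [hl] using ht
  have h₂ : ‖(t : ℂ) * l⁻¹‖ < 1 := by simpa [hl] using ht
  have hconj : conj l = l⁻¹ := by
    rw [Complex.inv_def, Complex.normSq_eq_norm_sq, hl]; simp
  have hnormSq : ((‖(t : ℂ) - l‖ : ℝ) : ℂ) ^ 2 = (1 - t * l) * (1 - t * l⁻¹) := by
    rw [← Complex.mul_conj', map_sub, Complex.conj_ofReal, hconj]
    field_simp
    ring
  have hne₁ : 1 - (t : ℂ) * l ≠ 0 := sub_ne_zero.mpr fun h => by simp [← h] at h₁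
  have hne₂ : 1 - (t : ℂ) * l⁻¹ ≠ 0 := sub_ne_zero.mpr fun h => by simp [← h] at h₂
  have hsum : (1 - (t : ℂ) * l)⁻¹ + ((1 - t * l⁻¹)⁻¹ - 1)
      = (1 - t ^ 2) / ((1 - t * l) * (1 - t * l⁻¹)) := by
    rw [show (t : ℂ) ^ 2 = t * l * (t * l⁻¹) by field_simp]
    generalize (t : ℂ) * l = z at hne₁ ⊢
    generalize (t : ℂ) * l⁻¹ = w at hne₂ ⊢
    field_simp
    ring
  push_cast
  rw [hnormSq, ← hsum]
  exact hasSum_pow_abs_mul_zpow h₁ h₂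

namespace Matrix

variable {𝕜 ι : Type*} [RCLike 𝕜] [Fintype ι] [DecidableEq ι]

open scoped ComplexOrder in
theorem norm_eq_one_of_mulVec_eq_smul {U : Matrix ι ι 𝕜} (hU : U * Uᴴ = 1) {x : ι → 𝕜}
    (hx : x ≠ 0) {l : 𝕜} (h : U *ᵥ x = l • x) : ‖l‖ = 1 := by
  have hpreserve : star (U *ᵥ x) ⬝ᵥ (U *ᵥ x) = star x ⬝ᵥ x := by
    rw [star_mulVec, dotProduct_mulVec, vecMul_vecMul, mul_eq_one_comm.mp hU, vecMul_one]
  rw [h, star_smul, smul_dotProduct, dotProduct_smul, smul_smul] at hpreserve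
  have hl : star l * l = 1 := by
    simpa using mul_right_cancel₀ (dotProduct_star_self_eq_zero.not.mpr hx)
      (hpreserve.trans (one_mul _).symm)
  rw [RCLike.star_def, RCLike.conj_mul] at hl
  exact (pow_eq_one_iff_of_nonneg (norm_nonneg l) two_ne_zero).mp (mod_cast hl)

theorem trace_eq_sum_inner_of_orthonormal {v : ι → EuclideanSpace 𝕜 ι} (hv : Orthonormal 𝕜 v)
    (B : Matrix ι ι 𝕜) : B.trace = ∑ i, ⟪v i, WithLp.toLp 2 (B *ᵥ v i)⟫_𝕜 := by
  let b := OrthonormalBasis.mk hv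
    (hv.linearIndependent.span_eq_top_of_card_eq_finrank' (by simp)).ge
  rw [← trace_toLin_eq B (PiLp.basisFun 2 𝕜 ι), ← toLpLin_eq_toLin,
    LinearMap.trace_eq_sum_inner _ b]
  simp [b, toLpLin_apply]

theorem trace_mul_eq_sum_of_orthonormal_eigenvectors {v : ι → EuclideanSpace 𝕜 ι}
    (hv : Orthonormal 𝕜 v) {B : Matrix ι ι 𝕜} {μ : ι → 𝕜} (heig : ∀ i, B *ᵥ v i = μ i • v i)
    (A : Matrix ι ι 𝕜) :
    (B * A).trace = ∑ i, μ i * ⟪v i, WithLp.toLp 2 (A *ᵥ v i)⟫_𝕜 := by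
  rw [trace_mul_comm, trace_eq_sum_inner_of_orthonormal hv]
  refine Finset.sum_congr rfl fun i _ => ?_
  rw [← mulVec_mulVec, heig, mulVec_smul, WithLp.toLp_smul, inner_smul_right]

theorem zpow_mulVec_eq_zpow_smul {K : Type*} [Field K]
    {M : Matrix ι ι K} (hM : IsUnit M.det) {x : ι → K} {l : K} (h : M *ᵥ x = l • x) (m : ℤ) :
    (M ^ m) *ᵥ x = l ^ m • x := by
  have hx : x = l • M⁻¹ *ᵥ x := by
    rw [← mulVec_smul, ← h, mulVec_mulVec, nonsing_inv_mul _ hM, one_mulVec]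
  rcases eq_or_ne l 0 with rfl | hl
  · rw [zero_smul] at hx
    subst hx
    simp
  have hinv : M⁻¹ *ᵥ x = l⁻¹ • x := by
    conv_rhs => rw [hx]
    rw [smul_smul, inv_mul_cancel₀ hl, one_smul]
  induction m using Int.induction_on with
  | zero => simp
  | succ k ih =>
    rw [zpow_add_one hM, ← mulVec_mulVec, h, mulVec_smul, ih, smul_smul, zpow_add_one₀ hl,
      mul_comm]
  | pred k ih =>
    rw [zpow_sub_one hM, ← mulVec_mulVec, hinv, mulVec_smul, ih, smul_smul, zpow_sub_one₀ hl,
      mul_comm]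

end Matrix

theorem abel_trace_sum_with_observable_general (n : ℕ)
    (U A : Matrix (Fin n) (Fin n) ℂ) (hU : U * U.conjTranspose = 1)
    (v : Fin n → EuclideanSpace ℂ (Fin n)) (hv : Orthonormal ℂ v)
    (lam : Fin n → ℂ)
    (heig : ∀ i, U.mulVec (v i) = lam i • v i) :
    (∀ m : ℤ, (U ^ m * A).trace
        = ∑ i, lam i ^ m * (inner ℂ (v i) (WithLp.toLp 2 (A.mulVec (v i))) : ℂ)) ∧
    ∀ t : ℝ, 0 < t → t < 1 →
      Summable (fun m : ℤ => ‖((t ^ |m| : ℝ) : ℂ) * (U ^ m * A).trace‖) ∧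
      ∑' m : ℤ, ((t ^ |m| : ℝ) : ℂ) * (U ^ m * A).trace
        = ∑ i, (((1 - t ^ 2) / ‖(t : ℂ) - lam i‖ ^ 2 : ℝ) : ℂ)
            * (inner ℂ (v i) (WithLp.toLp 2 (A.mulVec (v i))) : ℂ) := by
  have hdet : IsUnit U.det := Matrix.isUnit_det_of_right_inverse hU
  have hlam : ∀ i, ‖lam i‖ = 1 := fun i =>
    Matrix.norm_eq_one_of_mulVec_eq_smul hU (by simpa using hv.ne_zero i) (heig i)
  have htrace : ∀ m : ℤ, (U ^ m * A).trace
      = ∑ i, lam i ^ m * (inner ℂ (v i) (WithLp.toLp 2 (A.mulVec (v i))) : ℂ) := fun m =>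
    Matrix.trace_mul_eq_sum_of_orthonormal_eigenvectors hv
      (fun i => Matrix.zpow_mulVec_eq_zpow_smul hdet (heig i) m) A
  refine ⟨htrace, fun t ht₀ ht₁ => ?_⟩
  have hsum : HasSum (fun m : ℤ => ((t ^ |m| : ℝ) : ℂ) * (U ^ m * A).trace)
      (∑ i, (((1 - t ^ 2) / ‖(t : ℂ) - lam i‖ ^ 2 : ℝ) : ℂ)
        * (inner ℂ (v i) (WithLp.toLp 2 (A.mulVec (v i))) : ℂ)) := by
    simp_rw [htrace, Finset.mul_sum, ← mul_assoc]
    exact hasSum_sum fun i _ =>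
      (hasSum_poissonKernel (abs_lt.mpr ⟨by linarith, ht₁⟩) (hlam i)).mul_right _
  exact ⟨summable_norm_iff.mpr hsum.summable, hsum.tsum_eq⟩

/-- If `U` is unitary with orthonormal eigenbasis `v` and eigenvalues `λ_i`, then
`tr(U^m A) = ∑ i, λ_i^m ⟨v_i, A v_i⟩` for all `m ∈ ℤ`, and for `0 < t < 1` the series
`∑_{m ∈ ℤ} t^{|m|} tr(U^m A)` converges absolutely with sum
`∑ i, ((1 - t²)/|t - λ_i|²) ⟨v_i, A v_i⟩`. -/
theorem abel_trace_sum_with_observable (n : ℕ) (hn : 1 ≤ n)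
    (U A : Matrix (Fin n) (Fin n) ℂ) (hU : U * U.conjTranspose = 1)
    (v : Fin n → EuclideanSpace ℂ (Fin n)) (hv : Orthonormal ℂ v)
    (lam : Fin n → ℂ)
    (heig : ∀ i, U.mulVec (v i) = lam i • v i) :
    (∀ m : ℤ, (U ^ m * A).trace
        = ∑ i, lam i ^ m * (inner ℂ (v i) (WithLp.toLp 2 (A.mulVec (v i))) : ℂ)) ∧
    ∀ t : ℝ, 0 < t → t < 1 →
      Summable (fun m : ℤ => ‖((t ^ |m| : ℝ) : ℂ) * (U ^ m * A).trace‖) ∧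
      ∑' m : ℤ, ((t ^ |m| : ℝ) : ℂ) * (U ^ m * A).trace
        = ∑ i, (((1 - t ^ 2) / ‖(t : ℂ) - lam i‖ ^ 2 : ℝ) : ℂ)
            * (inner ℂ (v i) (WithLp.toLp 2 (A.mulVec (v i))) : ℂ) :=
  abel_trace_sum_with_observable_general n U A hU v hv lam heig
end

section
/- Let f : ℝ → ℂ be continuous and 2π-periodic. Then the limit as t → 1 from the left of (1/(2π)) ∫_{−π}^{π} ((1 − t²)/|t − e^{iθ}|²) f(θ) dθ equals f(0). -/
/-!
The Poisson kernel `P_t(θ) = poissonKernel 0 t (e^{iθ})` is nonnegative for `|t| ≤ 1`, and for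
`|t| < 1` its mean over the circle is `1` (the Poisson formula for the constant harmonic function
`1`). Since `|t - e^{iθ}|² = (1 - t)² + 2t(1 - cos θ)`, it tends to `0` as `t → 1⁻`, uniformly on
`{cos θ ≤ c}` for every `c < 1`. Thus `P_t / 2π` is an approximate identity on `(-π, π]` peaking
at `0`, and the peak-function theorem gives convergence of the Poisson means to `f 0`.
-/

open Complex Filter MeasureTheory Metric Set Topology

theorem poissonKernel_zero_circleMap_eq_div_norm_sq (t θ : ℝ) :
    poissonKernel 0 t (circleMap 0 1 θ) = (1 - t ^ 2) / ‖(t : ℂ) - exp (I * θ)‖ ^ 2 := by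
  simp [poissonKernel_def, circleMap_zero, norm_sub_rev, mul_comm I]

theorem norm_ofReal_sub_circleMap_sq (t θ : ℝ) :
    ‖(t : ℂ) - circleMap 0 1 θ‖ ^ 2 = (1 - t) ^ 2 + 2 * t * (1 - Real.cos θ) := by
  rw [← normSq_eq_norm_sq, normSq_apply]
  simp only [sub_re, ofReal_re, circleMap_zero_re, one_mul, sub_im, ofReal_im, circleMap_zero_im,
    zero_sub, mul_neg, neg_mul, neg_neg]
  nlinarith [Real.sin_sq_add_cos_sq θ]

theorem poissonKernel_zero_circleMap_eq_cos (t θ : ℝ) :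
    poissonKernel 0 t (circleMap 0 1 θ) = (1 - t ^ 2) / ((1 - t) ^ 2 + 2 * t * (1 - Real.cos θ)) := by
  simp [poissonKernel_def, ← norm_ofReal_sub_circleMap_sq, norm_sub_rev]

theorem poissonKernel_zero_circleMap_nonneg {t : ℝ} (ht : |t| ≤ 1) (θ : ℝ) :
    0 ≤ poissonKernel 0 t (circleMap 0 1 θ) := by
  rw [poissonKernel_def]
  simp only [sub_zero, norm_circleMap_zero, norm_real, Real.norm_eq_abs, abs_one, one_pow]
  exact div_nonneg (sub_nonneg.2 (pow_le_one₀ (abs_nonneg t) ht)) (sq_nonneg _)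

theorem continuous_poissonKernel_zero_circleMap {t : ℝ} (ht : |t| < 1) :
    Continuous fun θ ↦ poissonKernel 0 t (circleMap 0 1 θ) := by
  have hne : ∀ θ, circleMap 0 1 θ - t ≠ 0 := fun θ h ↦ by
    have := congrArg norm (sub_eq_zero.1 h)
    simp only [norm_circleMap_zero, abs_one, norm_real, Real.norm_eq_abs] at this
    linarith
  simp only [poissonKernel_def, sub_zero]
  exact Continuous.div (by fun_prop) (by fun_prop) (fun θ ↦ by simpa using hne θ)

theorem integral_poissonKernel_zero_circleMap {t : ℝ} (ht : |t| < 1) :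
    ∫ θ in -Real.pi..Real.pi, poissonKernel 0 t (circleMap 0 1 θ) = 2 * Real.pi := by
  have hmean := InnerProductSpace.HarmonicOnNhd.circleAverage_poissonKernel_smul
    (InnerProductSpace.harmonicOnNhd_const (1 : ℝ)) (c := 0) (R := 1) (w := t) (by simpa using ht)
  have hper : Function.Periodic (fun θ ↦ poissonKernel 0 t (circleMap 0 1 θ)) (2 * Real.pi) :=
    fun θ ↦ by simp only [periodic_circleMap 0 1 θ]
  rw [Real.circleAverage_def] at hmean
  simp only [Pi.smul_apply', smul_eq_mul, mul_one] at hmean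
  have hshift := hper.intervalIntegral_add_eq (-Real.pi) 0
  rw [zero_add, show -Real.pi + 2 * Real.pi = Real.pi by ring] at hshift
  rw [hshift]
  exact ((inv_mul_eq_one₀ (by positivity)).1 hmean).symm

theorem poissonKernel_zero_circleMap_le {t c θ : ℝ} (ht₀ : 0 < t) (ht₁ : t ≤ 1)
    (hθ : Real.cos θ ≤ c) (hc : c < 1) :
    poissonKernel 0 t (circleMap 0 1 θ) ≤ (1 - t ^ 2) / (2 * t * (1 - c)) := by
  rw [poissonKernel_zero_circleMap_eq_cos]
  apply div_le_div_of_nonneg_left (by nlinarith) (by nlinarith)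
  nlinarith [sq_nonneg (1 - t)]

theorem tendstoUniformlyOn_zero_of_norm_le {ι α E : Type*} [SeminormedAddGroup E]
    {F : ι → α → E} {g : ι → ℝ} {l : Filter ι} {s : Set α}
    (hg : Tendsto g l (𝓝 0)) (hFg : ∀ᶠ i in l, ∀ x ∈ s, ‖F i x‖ ≤ g i) :
    TendstoUniformlyOn F 0 l s := by
  rw [Metric.tendstoUniformlyOn_iff]
  intro ε hε
  filter_upwards [hFg, hg.eventually (gt_mem_nhds hε)] with i hi hgi x hx
  simpa [dist_eq_norm'] using (hi x hx).trans_lt hgi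

theorem exists_lt_one_forall_cos_le {u : Set ℝ} (hu : u ∈ 𝓝 0) :
    ∃ c < 1, ∀ θ ∈ Icc (-Real.pi) Real.pi \ u, Real.cos θ ≤ c := by
  obtain ⟨δ, hδ, hball⟩ := Metric.mem_nhds_iff.1 hu
  have hδπ : 0 < min δ Real.pi := lt_min hδ Real.pi_pos
  refine ⟨Real.cos (min δ Real.pi), ?_, ?_⟩
  · simpa using Real.cos_lt_cos_of_nonneg_of_le_pi le_rfl (min_le_right δ Real.pi) hδπ
  · rintro θ ⟨hθ, hθu⟩
    have hδθ : δ ≤ |θ| := not_lt.1 fun h ↦ hθu (hball (by simpa using h))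
    rw [← Real.cos_abs]
    exact Real.cos_le_cos_of_nonneg_of_le_pi hδπ.le (abs_le.2 hθ) ((min_le_left _ _).trans hδθ)

theorem tendstoUniformlyOn_poissonKernel_zero_circleMap {c : ℝ} (hc : c < 1) :
    TendstoUniformlyOn (fun (t : ℝ) θ ↦ (2 * Real.pi)⁻¹ * poissonKernel 0 t (circleMap 0 1 θ)) 0
      (𝓝[<] 1) {θ | Real.cos θ ≤ c} := by
  have hden : 2 * 1 * (1 - c) ≠ 0 := by nlinarith
  apply tendstoUniformlyOn_zero_of_norm_le
    (g := fun t ↦ (2 * Real.pi)⁻¹ * ((1 - t ^ 2) / (2 * t * (1 - c))))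
  · have hg : ContinuousAt (fun t : ℝ ↦ (2 * Real.pi)⁻¹ * ((1 - t ^ 2) / (2 * t * (1 - c)))) 1 := by
      fun_prop (disch := exact hden)
    simpa using hg.tendsto.mono_left nhdsWithin_le_nhds
  · filter_upwards [Ioo_mem_nhdsLT (show (0 : ℝ) < 1 by norm_num)] with t ht θ hθ
    have hP := poissonKernel_zero_circleMap_nonneg (abs_le.2 ⟨by linarith [ht.1], ht.2.le⟩) θ
    rw [Real.norm_eq_abs, abs_of_nonneg (by positivity)]
    gcongr
    exact poissonKernel_zero_circleMap_le ht.1 ht.2.le hθ hc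

theorem tendsto_poissonIntegral {E : Type*} [NormedAddCommGroup E] [NormedSpace ℝ E]
    [CompleteSpace E] {f : ℝ → E} (hfi : IntervalIntegrable f volume (-Real.pi) Real.pi)
    (hf0 : ContinuousAt f 0) :
    Tendsto (fun t : ℝ ↦ (2 * Real.pi)⁻¹ •
        ∫ θ in -Real.pi..Real.pi, poissonKernel 0 t (circleMap 0 1 θ) • f θ)
      (𝓝[<] 1) (𝓝 (f 0)) := by
  have hπ : -Real.pi ≤ Real.pi := by linarith [Real.pi_pos]
  have hdisk : ∀ᶠ t in 𝓝[<] (1 : ℝ), |t| < 1 := by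
    filter_upwards [Ioo_mem_nhdsLT (show (-1 : ℝ) < 1 by norm_num)] with t ht
    exact abs_lt.2 ht
  have hpeak := tendsto_setIntegral_peak_smul_of_integrableOn_of_tendsto (μ := volume) (x₀ := 0)
    (l := 𝓝[<] 1) (φ := fun (t : ℝ) θ ↦ (2 * Real.pi)⁻¹ * poissonKernel 0 t (circleMap 0 1 θ))
    measurableSet_Ioc measurableSet_Ioc subset_rfl self_mem_nhdsWithin measure_Ioc_lt_top.ne
    ?nonneg ?uniform ?mass ?measurable ((intervalIntegrable_iff_integrableOn_Ioc_of_le hπ).1 hfi)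
    (hf0.tendsto.mono_left nhdsWithin_le_nhds)
  case nonneg =>
    filter_upwards [hdisk] with t ht θ _
    exact mul_nonneg (by positivity) (poissonKernel_zero_circleMap_nonneg ht.le θ)
  case uniform =>
    intro u hu h0u
    obtain ⟨c, hc, hcos⟩ := exists_lt_one_forall_cos_le (hu.mem_nhds h0u)
    exact (tendstoUniformlyOn_poissonKernel_zero_circleMap hc).mono
      fun θ hθ ↦ hcos θ ⟨Ioc_subset_Icc_self hθ.1, hθ.2⟩
  case mass =>
    refine tendsto_const_nhds.congr' ?_
    filter_upwards [hdisk] with t ht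
    rw [integral_const_mul, ← intervalIntegral.integral_of_le hπ,
      integral_poissonKernel_zero_circleMap ht, inv_mul_cancel₀ (by positivity)]
  case measurable =>
    filter_upwards [hdisk] with t ht
    exact (continuous_const.mul (continuous_poissonKernel_zero_circleMap ht)).aestronglyMeasurable
  convert hpeak using 2 with t
  rw [intervalIntegral.integral_of_le hπ, ← integral_smul]
  simp_rw [smul_smul]

theorem poisson_kernel_tendsto_general (f : ℝ → ℂ) (hf : Continuous f) :
    Tendsto
      (fun t : ℝ => (1 / (2 * (Real.pi : ℂ)))
        * ∫ θ in (-Real.pi)..Real.pi,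
            (((1 - t ^ 2) /
              ‖(t : ℂ) - Complex.exp (Complex.I * (θ : ℂ))‖ ^ 2 : ℝ) : ℂ)
            * f θ)
      (nhdsWithin 1 (Set.Ioo (0 : ℝ) 1)) (nhds (f 0)) := by
  have hlim := (tendsto_poissonIntegral (hf.intervalIntegrable _ _) hf.continuousAt).mono_left
    (nhdsWithin_mono 1 (Ioo_subset_Iio_self (a := 0)))
  convert hlim using 2 with t
  simp [poissonKernel_zero_circleMap_eq_div_norm_sq, Complex.real_smul]

/-- For continuous `2π`-periodic `f`, the Abel–Poisson means
`(1/(2π)) ∫_{-π}^{π} ((1 - t²)/|t - e^{iθ}|²) f(θ) dθ` tend to `f 0`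
as `t → 1⁻` (along `(0,1)`). -/
theorem poisson_kernel_tendsto (f : ℝ → ℂ) (hf : Continuous f)
    (hper : Function.Periodic f (2 * Real.pi)) :
    Tendsto
      (fun t : ℝ => (1 / (2 * (Real.pi : ℂ)))
        * ∫ θ in (-Real.pi)..Real.pi,
            (((1 - t ^ 2) /
              ‖(t : ℂ) - Complex.exp (Complex.I * (θ : ℂ))‖ ^ 2 : ℝ) : ℂ)
            * f θ)
      (nhdsWithin 1 (Set.Ioo (0 : ℝ) 1)) (nhds (f 0)) :=
  poisson_kernel_tendsto_general f hf
end

section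
/- Let g : ℝ → ℂ be a Schwartz function. Then the limit as t → 1 from the left of ∑_{m∈ℤ} t^{|m|} ∫_ℝ e^{2πimx} g(x) dx equals ∑_{m∈ℤ} g(m). (Abel-regularized form of the Poisson summation formula, i.e. of the distributional identity ∑_{m∈ℤ} e^{2πimt} = ∑_{m∈ℤ} δ(t − m).) -/
/-!
The integrals `∫ e^{2πimx} g(x) dx` are the values `𝓕⁻ g (m)` of the inverse Fourier transform,
itself a Schwartz function, so they are absolutely summable over `ℤ`. Dominated convergence (with
dominating series `∑ ‖𝓕⁻ g (m)‖`, since `|t ^ |m|| ≤ 1`) lets `t → 1⁻` pass inside the sum, and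
Poisson summation identifies `∑ 𝓕⁻ g (m)` with `∑ g (m)`.
-/

open Filter FourierTransform Topology

theorem tendsto_tsum_zpow_abs_smul_nhdsLT_one {E : Type*} [NormedAddCommGroup E]
    [NormedSpace ℝ E] [CompleteSpace E] {f : ℤ → E} (hf : Summable fun m => ‖f m‖) :
    Tendsto (fun t : ℝ => ∑' m, t ^ |m| • f m) (𝓝[<] 1) (𝓝 (∑' m, f m)) := by
  refine tendsto_tsum_of_dominated_convergence hf (fun m => ?_) ?_
  · have : Tendsto (fun t : ℝ => t ^ |m|) (𝓝[<] 1) (𝓝 1) := by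
      simpa using ((continuousAt_zpow₀ (1 : ℝ) |m| (Or.inl one_ne_zero)).tendsto).mono_left
        nhdsWithin_le_nhds
    simpa using this.smul_const (f m)
  · filter_upwards [Ioo_mem_nhdsLT (zero_lt_one' ℝ)] with t ⟨ht0, ht1⟩ m
    have : ‖t ^ |m|‖ ≤ 1 := by
      rw [← Int.natCast_natAbs, zpow_natCast, norm_pow, Real.norm_of_nonneg ht0.le]
      exact pow_le_one₀ ht0.le ht1.le
    simpa [norm_smul] using mul_le_of_le_one_left (norm_nonneg (f m)) this

theorem SchwartzMap.summable_norm_intCast {E : Type*} [NormedAddCommGroup E] [NormedSpace ℝ E]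
    (f : SchwartzMap ℝ E) : Summable fun m : ℤ => ‖f m‖ :=
  summable_of_isBigO (Real.summable_abs_int_rpow one_lt_two)
    ((f.isBigO_cocompact_rpow (-2)).comp_tendsto Int.tendsto_coe_cofinite).norm_left

theorem Real.fourierInv_real_eq_integral_exp_mul (f : ℝ → ℂ) (ξ : ℝ) :
    𝓕⁻ f ξ = ∫ x : ℝ, Complex.exp (2 * Real.pi * Complex.I * ξ * x) * f x := by
  rw [fourierInv_eq_fourier_neg, fourier_real_eq_integral_exp_smul]
  congr 1 with x
  rw [smul_eq_mul]
  push_cast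
  ring_nf

theorem SchwartzMap.tsum_fourierInv_intCast (f : SchwartzMap ℝ ℂ) :
    ∑' m : ℤ, 𝓕⁻ f m = ∑' m : ℤ, f m := by
  simp_rw [fourierInv_coe, Real.fourierInv_eq_fourier_neg, ← fourier_coe]
  rw [← tsum_comp_neg]
  simpa using (f.tsum_eq_tsum_fourier 0).symm

/-- Abel-regularized Poisson summation formula: for a Schwartz function `g`,
`lim_{t → 1⁻} ∑_{m ∈ ℤ} t^{|m|} ∫_ℝ e^{2πimx} g(x) dx = ∑_{m ∈ ℤ} g(m)`. -/
theorem abel_poisson_summation (g : SchwartzMap ℝ ℂ) :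
    Tendsto
      (fun t : ℝ => ∑' m : ℤ, ((t ^ |m| : ℝ) : ℂ)
        * ∫ x : ℝ, Complex.exp (2 * (Real.pi : ℂ) * Complex.I * (m : ℂ) * (x : ℂ)) * g x)
      (nhdsWithin 1 (Set.Ioo (0 : ℝ) 1))
      (nhds (∑' m : ℤ, g (m : ℝ))) := by
  have habel := tendsto_tsum_zpow_abs_smul_nhdsLT_one (𝓕⁻ g).summable_norm_intCast
  rw [SchwartzMap.tsum_fourierInv_intCast] at habel
  simp only [SchwartzMap.fourierInv_coe, Real.fourierInv_real_eq_integral_exp_mul,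
    Complex.real_smul, Complex.ofReal_intCast] at habel
  exact habel.mono_left (nhdsWithin_mono _ Set.Ioo_subset_Iio_self)
end

section
/- Let n ≥ 1 and let U : ℝ → M_n(ℂ) be a differentiable family of matrices such that U(k) is unitary for every k. Suppose λ : ℝ → ℂ and v : ℝ → ℂⁿ are differentiable, with ‖v(k)‖ = 1 and U(k) v(k) = λ(k) v(k) for all k. Then for every k₀ with λ(k₀) = 1, the derivative of the eigenvalue satisfies λ'(k₀) = ⟨v(k₀), U'(k₀) v(k₀)⟩, where U'(k₀) is the entrywise derivative of U at k₀. -/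
/-!
Since `‖v‖ = 1`, the eigenvalue is the Rayleigh quotient `λ = ⟪v, U v⟫`, and the product rule gives
`λ' = ⟪v', U v⟫ + ⟪v, U' v⟫ + ⟪v, U v'⟫`. At `k₀` we have `U v = v`, hence also `Uᴴ v = v` by
unitarity, so `⟪v, U v'⟫ = ⟪v, v'⟫`. The two remaining terms `⟪v', v⟫ + ⟪v, v'⟫` are the derivative
of the constant `‖v‖²`, hence vanish.
-/

open Matrix WithLp

theorem HasDerivAt.mulVec {𝕜 𝔸 m n : Type*} [NontriviallyNormedField 𝕜] [NormedCommRing 𝔸]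
    [NormedAlgebra 𝕜 𝔸] [Fintype m] [Fintype n]
    {A : 𝕜 → Matrix m n 𝔸} {A' : Matrix m n 𝔸} {x : 𝕜 → n → 𝔸} {x' : n → 𝔸} {t : 𝕜}
    (hA : ∀ i j, HasDerivAt (fun s => A s i j) (A' i j) t) (hx : HasDerivAt x x' t) :
    HasDerivAt (fun s => A s *ᵥ x s) (A' *ᵥ x t + A t *ᵥ x') t := by
  refine hasDerivAt_pi.2 fun i => ?_
  show HasDerivAt (fun s => ∑ j, A s i j * x s j) (∑ j, A' i j * x t j + ∑ j, A t i j * x' j) t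
  rw [← Finset.sum_add_distrib]
  exact HasDerivAt.fun_sum fun j _ => (hA i j).mul (hasDerivAt_pi.1 hx j)

theorem PiLp.hasDerivAt_toLp_iff {𝕜 ι : Type*} {β : ι → Type*} [NontriviallyNormedField 𝕜]
    [Fintype ι] [∀ i, NormedAddCommGroup (β i)] [∀ i, NormedSpace 𝕜 (β i)]
    {p : ENNReal} [Fact (1 ≤ p)] {f : 𝕜 → ∀ i, β i} {f' : ∀ i, β i} {t : 𝕜} :
    HasDerivAt (fun s => toLp p (f s)) (toLp p f') t ↔ HasDerivAt f f' t := by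
  simp only [hasDerivAt_iff_hasFDerivAt]
  exact (PiLp.continuousLinearEquiv p 𝕜 β).symm.comp_hasFDerivAt_iff'

theorem Matrix.conjTranspose_mulVec_eq_self {n α : Type*} [Fintype n] [DecidableEq n]
    [CommRing α] [StarRing α] {U : Matrix n n α} {x : n → α}
    (hU : U * Uᴴ = 1) (hx : U *ᵥ x = x) : Uᴴ *ᵥ x = x := by
  calc Uᴴ *ᵥ x = (Uᴴ * U) *ᵥ x := by rw [← mulVec_mulVec, hx]
    _ = x := by rw [mul_eq_one_comm.mp hU, one_mulVec]

theorem EuclideanSpace.inner_toLp_mulVec {𝕜 m n : Type*} [RCLike 𝕜] [Fintype m] [Fintype n]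
    (A : Matrix m n 𝕜) (x : m → 𝕜) (y : n → 𝕜) :
    inner 𝕜 (toLp 2 x) (toLp 2 (A *ᵥ y)) = inner 𝕜 (toLp 2 (Aᴴ *ᵥ x)) (toLp 2 y) := by
  rw [EuclideanSpace.inner_toLp_toLp, EuclideanSpace.inner_toLp_toLp, star_mulVec,
    conjTranspose_conjTranspose, dotProduct_comm, dotProduct_mulVec, dotProduct_comm]

theorem EuclideanSpace.eq_inner_mulVec_of_mulVec_eq_smul {𝕜 n : Type*} [RCLike 𝕜] [Fintype n]
    {A : Matrix n n 𝕜} {v : EuclideanSpace 𝕜 n} {μ : 𝕜} (hv : ‖v‖ = 1) (h : A *ᵥ v = μ • v) :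
    μ = inner 𝕜 v (toLp 2 (A *ᵥ v)) := by
  rw [h, toLp_smul, toLp_ofLp, inner_smul_right, inner_self_eq_norm_sq_to_K, hv]
  simp

theorem inner_add_inner_eq_zero_of_hasDerivAt_of_norm_eq {𝕜 E : Type*} [RCLike 𝕜]
    [NormedAddCommGroup E] [InnerProductSpace 𝕜 E] [NormedSpace ℝ E]
    {v : ℝ → E} {v' : E} {t c : ℝ} (hv : HasDerivAt v v' t) (hnorm : ∀ s, ‖v s‖ = c) :
    inner 𝕜 (v t) v' + inner 𝕜 v' (v t) = 0 := by
  have hconst : (fun s => inner 𝕜 (v s) (v s)) = fun _ => ((c : 𝕜) ^ 2) := by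
    funext s; rw [inner_self_eq_norm_sq_to_K, hnorm]
  have := hv.inner 𝕜 hv
  rw [hconst] at this
  exact this.unique (hasDerivAt_const t _)

theorem eigenvalue_speed_general (n : ℕ)
    (U U' : ℝ → Matrix (Fin n) (Fin n) ℂ)
    (hU' : ∀ k i j, HasDerivAt (fun s => U s i j) (U' k i j) k)
    (hunit : ∀ k, U k * (U k).conjTranspose = 1)
    (lam : ℝ → ℂ) (v : ℝ → EuclideanSpace ℂ (Fin n))
    (hv : Differentiable ℝ v)
    (hnorm : ∀ k, ‖v k‖ = 1)
    (heig : ∀ k, (U k).mulVec (v k) = lam k • v k)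
    (k₀ : ℝ) (hk₀ : lam k₀ = 1) :
    deriv lam k₀ = (inner ℂ (v k₀) (WithLp.toLp 2 ((U' k₀).mulVec (v k₀))) : ℂ) := by
  set v' := deriv v k₀
  have hv' : HasDerivAt v v' k₀ := (hv k₀).hasDerivAt
  have hUv : HasDerivAt (fun k => toLp 2 (U k *ᵥ v k)) (toLp 2 (U' k₀ *ᵥ v k₀ + U k₀ *ᵥ v')) k₀ :=
    PiLp.hasDerivAt_toLp_iff.2 <| .mulVec (hU' k₀) (PiLp.hasDerivAt_toLp_iff.1 hv')
  have hfix : U k₀ *ᵥ v k₀ = v k₀ := by rw [heig, hk₀, one_smul]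
  have hrayleigh : lam = fun k => inner ℂ (v k) (toLp 2 (U k *ᵥ v k)) :=
    funext fun k => EuclideanSpace.eq_inner_mulVec_of_mulVec_eq_smul (hnorm k) (heig k)
  rw [hrayleigh, (hv'.inner ℂ hUv).deriv, toLp_add, inner_add_right,
    EuclideanSpace.inner_toLp_mulVec (U k₀), conjTranspose_mulVec_eq_self (hunit k₀) hfix, hfix]
  simp only [toLp_ofLp]
  rw [add_assoc, inner_add_inner_eq_zero_of_hasDerivAt_of_norm_eq hv' hnorm, add_zero]

/-- Speed of an eigenvalue: if `U(k)` is a differentiable family of unitary matrices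
with differentiable unit eigenvector family `v(k)` and eigenvalue family `λ(k)`,
then at any `k₀` with `λ(k₀) = 1`, one has `λ'(k₀) = ⟨v(k₀), U'(k₀) v(k₀)⟩`,
where `U'` is the entrywise derivative of `U`. -/
theorem eigenvalue_speed (n : ℕ) (hn : 1 ≤ n)
    (U U' : ℝ → Matrix (Fin n) (Fin n) ℂ)
    (hU' : ∀ k i j, HasDerivAt (fun s => U s i j) (U' k i j) k)
    (hunit : ∀ k, U k * (U k).conjTranspose = 1)
    (lam : ℝ → ℂ) (v : ℝ → EuclideanSpace ℂ (Fin n))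
    (hlam : Differentiable ℝ lam) (hv : Differentiable ℝ v)
    (hnorm : ∀ k, ‖v k‖ = 1)
    (heig : ∀ k, (U k).mulVec (v k) = lam k • v k)
    (k₀ : ℝ) (hk₀ : lam k₀ = 1) :
    deriv lam k₀ = (inner ℂ (v k₀) (WithLp.toLp 2 ((U' k₀).mulVec (v k₀))) : ℂ) :=
  eigenvalue_speed_general n U U' hU' hunit lam v hv hnorm heig k₀ hk₀
end

section
/- Let n ≥ 1 and let U be an n×n unitary matrix over ℂ. Then the averages (1/(2N+1)) ∑_{m=−N}^{N} U^m converge, as N → ∞, to the matrix of the orthogonal projection of ℂⁿ onto the eigenspace {x ∈ ℂⁿ : U x = x}. (Two-sided von Neumann mean ergodic theorem for a finite-dimensional unitary; in particular the limit is 0 if and only if 1 is not an eigenvalue of U.) -/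
open Filter Topology Finset

/-!
Splitting the symmetric sum at `m = 0` writes `∑_{|m| ≤ N} U^m x` as the forward Birkhoff sums
of `U` and of `U⁻¹ = U*` of length `N + 1`, minus `x`. By von Neumann's mean ergodic theorem for
contractions, both forward averages converge to the orthogonal projection onto the fixed space,
which is the same for `U` and `U*`; each carries weight `(N + 1) / (2N + 1) → 1/2`, so the
two-sided average converges to that projection on every vector, hence entrywise.
-/

theorem Finset.sum_Icc_neg_natCast {M : Type*} [AddCommGroup M] (f : ℤ → M) (N : ℕ) :
    ∑ m ∈ Icc (-N : ℤ) N, f m = ∑ k ∈ range (N + 1), (f k + f (-k)) - f 0 := by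
  induction N with
  | zero => simp
  | succ N ih =>
    rw [Nat.cast_succ, sum_Icc_succ_eq_add_endpoints, ih, sum_range_succ _ (N + 1)]
    push_cast
    abel

theorem Matrix.sum_zpow_Icc_neg {n R : Type*} [Fintype n] [DecidableEq n] [CommRing R]
    (A : Matrix n n R) (N : ℕ) :
    ∑ m ∈ Icc (-N : ℤ) N, A ^ m = ∑ k ∈ range (N + 1), (A ^ k + A⁻¹ ^ k) - 1 := by
  rw [sum_Icc_neg_natCast]
  congr 1
  refine sum_congr rfl fun k _ => ?_
  rw [zpow_neg_natCast, inv_pow', zpow_natCast]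

theorem tendsto_inv_two_mul_natCast_add_one {𝕜 : Type*} [RCLike 𝕜] :
    Tendsto (fun N : ℕ => (2 * (N : 𝕜) + 1)⁻¹) atTop (𝓝 0) := by
  have h : Tendsto (fun N : ℕ => 2 * N + 1) atTop atTop :=
    tendsto_atTop_mono (fun N => by simp only [id]; omega) tendsto_id
  simpa [Function.comp_def] using (tendsto_inv_atTop_nhds_zero_nat (𝕜 := 𝕜)).comp h

section InnerProductSpace

variable {𝕜 E : Type*} [RCLike 𝕜] [NormedAddCommGroup E] [InnerProductSpace 𝕜 E] [CompleteSpace E]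

theorem ContinuousLinearMap.tendsto_inv_two_mul_add_one_smul_sum_pow (f : E →L[𝕜] E)
    (hf : ‖f‖ ≤ 1) (x : E) :
    Tendsto (fun N : ℕ => (2 * (N : 𝕜) + 1)⁻¹ • ∑ k ∈ range (N + 1), (f ^ k) x) atTop
      (𝓝 ((2 : 𝕜)⁻¹ • (f.eqLocus (1 : E →L[𝕜] E)).starProjection x)) := by
  have hB := (f.tendsto_birkhoffAverage_orthogonalProjection hf x).comp (tendsto_add_atTop_nat 1)
  -- the weight `(N + 1) / (2N + 1)`
  have hc : Tendsto (fun N : ℕ => (2 : 𝕜)⁻¹ + 2⁻¹ * (2 * (N : 𝕜) + 1)⁻¹) atTop (𝓝 2⁻¹) := by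
    simpa using (tendsto_inv_two_mul_natCast_add_one (𝕜 := 𝕜)).const_mul (2⁻¹ : 𝕜) |>.const_add 2⁻¹
  refine (hc.smul hB).congr fun N => ?_
  have hN : (2 * (N : 𝕜) + 1) ≠ 0 := by exact_mod_cast (2 * N).succ_ne_zero
  simp only [Function.comp_apply, birkhoffAverage, birkhoffSum, smul_smul, id_eq,
    FunLike.coe_pow_eq_iterate]
  congr 1
  push_cast
  field_simp
  ring

theorem Unitary.norm_le_one {g : E →L[𝕜] E} (hg : g ∈ unitary (E →L[𝕜] E)) : ‖g‖ ≤ 1 :=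
  g.opNorm_le_bound zero_le_one fun x => by rw [Unitary.norm_map ⟨g, hg⟩ x, one_mul]

theorem Unitary.eqLocus_star_one {g : E →L[𝕜] E} (hg : g ∈ unitary (E →L[𝕜] E)) :
    (star g).eqLocus (1 : E →L[𝕜] E) = g.eqLocus (1 : E →L[𝕜] E) := by
  ext x
  have h₁ : star g (g x) = x := congr($(Unitary.star_mul_self_of_mem hg) x)
  have h₂ : g (star g x) = x := congr($(Unitary.mul_star_self_of_mem hg) x)
  simp only [LinearMap.mem_eqLocus, ContinuousLinearMap.coe_coe, one_apply_eq_self]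
  exact ⟨fun h => by simpa [h] using h₂, fun h => by simpa [h] using h₁⟩

theorem Unitary.tendsto_two_sided_average {g : E →L[𝕜] E} (hg : g ∈ unitary (E →L[𝕜] E))
    (x : E) :
    Tendsto (fun N : ℕ =>
        ((2 * (N : 𝕜) + 1)⁻¹ • (∑ k ∈ range (N + 1), (g ^ k + star g ^ k) - 1)) x)
      atTop (𝓝 ((g.eqLocus (1 : E →L[𝕜] E)).starProjection x)) := by
  have h₁ := g.tendsto_inv_two_mul_add_one_smul_sum_pow (norm_le_one hg) x
  have h₂ := (star g).tendsto_inv_two_mul_add_one_smul_sum_pow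
    (norm_le_one (Unitary.star_mem hg)) x
  simp only [eqLocus_star_one hg] at h₂
  have hlim : (2 : 𝕜)⁻¹ • (g.eqLocus (1 : E →L[𝕜] E)).starProjection x
      + (2 : 𝕜)⁻¹ • (g.eqLocus (1 : E →L[𝕜] E)).starProjection x - (0 : 𝕜) • x
      = (g.eqLocus (1 : E →L[𝕜] E)).starProjection x := by
    rw [zero_smul, sub_zero, ← add_smul]
    norm_num
  rw [← hlim]
  refine ((h₁.add h₂).sub (tendsto_inv_two_mul_natCast_add_one.smul_const x)).congr fun N => ?_
  simp only [smul_apply, sub_apply, _root_.sum_apply, add_apply, sum_add_distrib,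
    one_apply_eq_self, smul_sub, smul_add]

end InnerProductSpace

namespace Matrix

variable {n 𝕜 : Type*} [RCLike 𝕜] [Fintype n] [DecidableEq n]

theorem tendsto_of_forall_tendsto_toEuclideanCLM_apply {ι : Type*} {l : Filter ι}
    {A : ι → Matrix n n 𝕜} {B : Matrix n n 𝕜}
    (h : ∀ x, Tendsto (fun i => toEuclideanCLM (n := n) (𝕜 := 𝕜) (A i) x) l
      (𝓝 (toEuclideanCLM (n := n) (𝕜 := 𝕜) B x))) :
    Tendsto A l (𝓝 B) := by
  refine tendsto_pi_nhds.2 fun i => tendsto_pi_nhds.2 fun j => ?_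
  simpa [Function.comp_def, toEuclideanCLM_toLp, mulVec_single_one] using
    ((PiLp.continuous_apply 2 _ i).tendsto _).comp (h (WithLp.toLp 2 (Pi.single j 1)))

theorem mulVec_eq_self_iff_toEuclideanCLM (A : Matrix n n 𝕜) (v : n → 𝕜) :
    A *ᵥ v = v ↔ toEuclideanCLM (n := n) (𝕜 := 𝕜) A (WithLp.toLp 2 v) = WithLp.toLp 2 v := by
  rw [toEuclideanCLM_toLp, (WithLp.toLp_injective 2).eq_iff]

omit [DecidableEq n] in
theorem eq_zero_iff_of_isIdempotentElem {R : Type*} [Semiring R] {P : Matrix n n R}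
    (hP : IsIdempotentElem P) : P = 0 ↔ ¬ ∃ x, x ≠ 0 ∧ P *ᵥ x = x := by
  refine ⟨fun h => ?_, fun h => ext_iff_mulVec.2 fun v => ?_⟩
  · rintro ⟨x, hx, hPx⟩
    exact hx (by simpa [h] using hPx.symm)
  · by_contra hv
    exact h ⟨P *ᵥ v, by simpa using hv, by rw [mulVec_mulVec, hP.eq]⟩

end Matrix

theorem vonNeumann_mean_ergodic_unitary_matrix_general (n : ℕ)
    (U : Matrix (Fin n) (Fin n) ℂ) (hU : U * U.conjTranspose = 1) :
    ∃ P : Matrix (Fin n) (Fin n) ℂ,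
      P * P = P ∧
      P.conjTranspose = P ∧
      (∀ x : Fin n → ℂ, U.mulVec x = x ↔ P.mulVec x = x) ∧
      Tendsto
        (fun N : ℕ => (1 / (2 * (N : ℂ) + 1)) • ∑ m ∈ Finset.Icc (-(N : ℤ)) (N : ℤ), U ^ m)
        atTop (nhds P) ∧
      (P = 0 ↔ ¬ ∃ x : Fin n → ℂ, x ≠ 0 ∧ U.mulVec x = x) := by
  set Φ := Matrix.toEuclideanCLM (n := Fin n) (𝕜 := ℂ)
  have hg : Φ U ∈ unitary _ := Unitary.map_mem Φ (Matrix.mem_unitaryGroup_iff.2 hU)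
  set F := (Φ U).eqLocus (1 : EuclideanSpace ℂ (Fin n) →L[ℂ] EuclideanSpace ℂ (Fin n))
  set P := Φ.symm F.starProjection
  have hΦP : Φ P = F.starProjection := Φ.apply_symm_apply _
  have hPP : IsIdempotentElem P := F.isIdempotentElem_starProjection.map Φ.symm
  have hfix : ∀ x, U.mulVec x = x ↔ P.mulVec x = x := fun x => by
    rw [Matrix.mulVec_eq_self_iff_toEuclideanCLM, Matrix.mulVec_eq_self_iff_toEuclideanCLM, hΦP,
      Submodule.starProjection_eq_self_iff, LinearMap.mem_eqLocus]
    rfl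
  refine ⟨P, hPP, ((isSelfAdjoint_starProjection F).map Φ.symm).star_eq, hfix, ?_,
    by simpa only [hfix] using Matrix.eq_zero_iff_of_isIdempotentElem hPP⟩
  refine Matrix.tendsto_of_forall_tendsto_toEuclideanCLM_apply fun x => ?_
  rw [hΦP]
  simpa only [Matrix.sum_zpow_Icc_neg, Matrix.inv_eq_right_inv hU, ← Matrix.star_eq_conjTranspose,
    map_smul, map_sub, map_sum, map_add, map_pow, map_one, map_star, one_div]
    using Unitary.tendsto_two_sided_average hg x

/-- Two-sided von Neumann mean ergodic theorem for a finite-dimensional unitary: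
for an `n × n` unitary matrix `U`, the averages `(1/(2N+1)) ∑_{m=-N}^{N} U^m`
converge as `N → ∞` to the matrix `P` of the orthogonal projection onto the
eigenspace `{x : U x = x}` (the unique Hermitian idempotent whose fixed vectors
are exactly the fixed vectors of `U`); in particular the limit is `0` iff `1` is
not an eigenvalue of `U`. -/
theorem vonNeumann_mean_ergodic_unitary_matrix (n : ℕ) (hn : 1 ≤ n)
    (U : Matrix (Fin n) (Fin n) ℂ) (hU : U * U.conjTranspose = 1) :
    ∃ P : Matrix (Fin n) (Fin n) ℂ,
      P * P = P ∧
      P.conjTranspose = P ∧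
      (∀ x : Fin n → ℂ, U.mulVec x = x ↔ P.mulVec x = x) ∧
      Tendsto
        (fun N : ℕ => (1 / (2 * (N : ℂ) + 1)) • ∑ m ∈ Finset.Icc (-(N : ℤ)) (N : ℤ), U ^ m)
        atTop (nhds P) ∧
      (P = 0 ↔ ¬ ∃ x : Fin n → ℂ, x ≠ 0 ∧ U.mulVec x = x) :=
  vonNeumann_mean_ergodic_unitary_matrix_general n U hU
end

section
/- For every n ≥ 1 there exists a constant C > 0 (depending only on n) such that for every n×n unitary matrix U over ℂ and every natural number N, |det(I − U) · ∑_{j=−N}^{N} tr(U^j)| ≤ C. -/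
/-!
Multiplying the symmetric sum of powers by `1 - U` telescopes:
`(∑_{j=-N}^{N} U^j) (1 - U) = U^{-N} - U^{N+1}`. Multiplying further by `adj (1 - U)` turns
`1 - U` into `det (1 - U)`, so the quantity is `tr ((U^{-N} - U^{N+1}) adj (1 - U))`. Both
factors have entries bounded independently of `U` and `N`: a difference of two unitaries by `2`,
and the adjugate of `1 - U`, whose entries are determinants of matrices with entries of size at
most `2`, by `n! 2^n`.
-/

open Finset Matrix

theorem Int.sum_Icc_sub_succ {M : Type*} [AddCommGroup M] (f : ℤ → M) {a b : ℤ}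
    (hab : a ≤ b + 1) : ∑ j ∈ Icc a b, (f j - f (j + 1)) = f a - f (b + 1) := by
  rw [Int.Icc_eq_finset_map, sum_map]
  simpa [add_assoc, hab] using Finset.sum_range_sub' (fun k : ℕ ↦ f (a + k)) (b + 1 - a).toNat

namespace Matrix

variable {n : Type*} [Fintype n]

theorem norm_trace_mul_le {R : Type*} [SeminormedRing R] {A B : Matrix n n R} {a b : ℝ}
    (hA : ∀ i j, ‖A i j‖ ≤ a) (hB : ∀ i j, ‖B i j‖ ≤ b) :
    ‖(A * B).trace‖ ≤ Fintype.card n * (Fintype.card n * (a * b)) := by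
  have hentry : ∀ i k, ‖A i k * B k i‖ ≤ a * b := fun i k ↦
    (norm_mul_le _ _).trans <|
      mul_le_mul (hA i k) (hB k i) (norm_nonneg _) ((norm_nonneg _).trans (hA i k))
  calc ‖∑ i, ∑ k, A i k * B k i‖
      ≤ ∑ _i : n, ∑ _k : n, a * b :=
        norm_sum_le_of_le _ fun i _ ↦ norm_sum_le_of_le _ fun k _ ↦ hentry i k
    _ = _ := by simp

variable [DecidableEq n]

theorem zpow_mem_unitaryGroup {α : Type*} [CommRing α] [StarRing α] {U : Matrix n n α}
    (hU : U ∈ unitaryGroup n α) : ∀ j : ℤ, U ^ j ∈ unitaryGroup n α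
  | (k : ℕ) => by rw [zpow_natCast]; exact pow_mem hU k
  | Int.negSucc k => by
    have hUk := pow_mem hU (k + 1)
    rw [zpow_negSucc, inv_eq_left_inv (mem_unitaryGroup_iff'.1 hUk)]
    exact Unitary.star_mem hUk

section CommRing

variable {R : Type*} [CommRing R]

theorem sum_Icc_zpow_mul_one_sub {A : Matrix n n R} (hA : IsUnit A.det) {a b : ℤ}
    (hab : a ≤ b + 1) : (∑ j ∈ Icc a b, A ^ j) * (1 - A) = A ^ a - A ^ (b + 1) := by
  rw [sum_mul, ← Int.sum_Icc_sub_succ (A ^ ·) hab]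
  refine sum_congr rfl fun j _ ↦ ?_
  rw [mul_sub, mul_one, zpow_add_one hA]

theorem trace_mul_mul_adjugate (S B : Matrix n n R) :
    (S * B * B.adjugate).trace = B.det * S.trace := by
  rw [Matrix.mul_assoc, mul_adjugate, Matrix.mul_smul, Matrix.mul_one, trace_smul, smul_eq_mul]

theorem det_one_sub_mul_sum_trace_zpow {A : Matrix n n R} (hA : IsUnit A.det) {a b : ℤ}
    (hab : a ≤ b + 1) :
    (1 - A).det * ∑ j ∈ Icc a b, (A ^ j).trace =
      ((A ^ a - A ^ (b + 1)) * (1 - A).adjugate).trace := by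
  rw [← sum_Icc_zpow_mul_one_sub hA hab, trace_mul_mul_adjugate, trace_sum]

end CommRing

theorem norm_adjugate_apply_le {K : Type*} [NormedField K] {M : Matrix n n K} {x : ℝ}
    (hx : 1 ≤ x) (hM : ∀ i j, ‖M i j‖ ≤ x) (i j : n) :
    ‖M.adjugate i j‖ ≤ (Fintype.card n).factorial * x ^ Fintype.card n := by
  rw [adjugate_apply, ← nsmul_eq_mul]
  refine det_le (abv := IsAbsoluteValue.toAbsoluteValue (norm : K → ℝ)) fun k l ↦ ?_
  rw [updateRow_apply]
  split_ifs
  · rw [Pi.single_apply]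
    split_ifs <;> simp [hx, zero_le_one.trans hx]
  · exact hM k l

theorem norm_sub_apply_le_two {𝕜 : Type*} [RCLike 𝕜] {U V : Matrix n n 𝕜}
    (hU : U ∈ unitaryGroup n 𝕜) (hV : V ∈ unitaryGroup n 𝕜) (i j : n) : ‖(U - V) i j‖ ≤ 2 :=
  (norm_sub_le _ _).trans <| by
    linarith [entry_norm_bound_of_unitary hU i j, entry_norm_bound_of_unitary hV i j]

end Matrix

/-- Uniform boundedness of the Newton-identity remainder: for every `n ≥ 1` there is a
constant `C > 0`, depending only on `n`, such that for every `n × n` unitary matrix `U`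
over `ℂ` and every `N : ℕ`, `|det(I - U) · ∑_{j=-N}^{N} tr(U^j)| ≤ C`. -/
theorem det_mul_partial_trace_sum_bounded (n : ℕ) (hn : 1 ≤ n) :
    ∃ C : ℝ, 0 < C ∧
      ∀ U : Matrix (Fin n) (Fin n) ℂ, U * U.conjTranspose = 1 →
        ∀ N : ℕ,
          ‖(1 - U).det * ∑ j ∈ Finset.Icc (-(N : ℤ)) (N : ℤ), (U ^ j).trace‖ ≤ C := by
  have hn' : (0 : ℝ) < n := by exact_mod_cast hn
  refine ⟨n * (n * (2 * (n.factorial * 2 ^ n))), by positivity, fun U hU N ↦ ?_⟩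
  have hU' : U ∈ unitaryGroup (Fin n) ℂ := mem_unitaryGroup_iff.2 hU
  rw [det_one_sub_mul_sum_trace_zpow (isUnit_det_of_right_inverse hU) (by omega)]
  refine (norm_trace_mul_le
    (norm_sub_apply_le_two (zpow_mem_unitaryGroup hU' _) (zpow_mem_unitaryGroup hU' _))
    (norm_adjugate_apply_le one_le_two (norm_sub_apply_le_two (one_mem _) hU'))).trans ?_
  rw [Fintype.card_fin]
end
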